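/- arXiv:1712.05864 — 3 statements merged into one kernel-verified Lean document; each statement's English description precedes it below -/
import Mathlib

section
/- Geometric decay of the singular values of a Cauchy matrix with nodes in opposite disks: Let E = {z ∈ ℂ : |z − z₀| ≤ η} with z₀, η ∈ ℝ and 0 < η < z₀, let φ = √(z₀² − η²), and let μ₁ = (z₀ + φ)/(z₀ − φ). Let C ∈ ℂ^{m×n} (m ≥ n) be the Cauchy matrix with entries C_{ij} = 1/(z_i − w_j), where z_1, …, z_m ∈ E and w_1, …, w_n ∈ −E = {−z : z ∈ E}. Then for all 0 ≤ k < n, σ_{k+1}(C) ≤ μ₁^{−k} ‖C‖₂. -/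
/-!
With `g(u) = (u - φ)/(u + φ)`, the Cauchy kernel satisfies, for every `k`,
`1/(z + v) = Σ_{l<k} pₗ(z) qₗ(v) + g(z)ᵏ · 1/(z + v) · g(v)ᵏ`, because
`1 - g(z) g(v) = 2φ (z + v)/((z + φ)(v + φ))` turns the sum into a truncated geometric series.
Taking `v = -wⱼ`, the Cauchy matrix therefore differs from a matrix of rank `≤ k` by
`diag(g(zᵢ)ᵏ) · C · diag(g(-wⱼ)ᵏ)`. The choice `φ² = z₀² - η²` makes `|g| ≤ μ₁^{-1/2}` on `E`,
so that remainder has spectral norm `≤ μ₁⁻ᵏ ‖C‖₂`, which bounds `σ_{k+1}(C)`.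
-/

open Finset Matrix
open scoped Matrix.Norms.L2Operator

noncomputable def specNorm {m n : ℕ} (M : Matrix (Fin m) (Fin n) ℂ) : ℝ :=
  ‖LinearMap.toContinuousLinearMap (Matrix.toEuclideanLin M)‖

/-- The `j`-th largest singular value of a complex matrix (for `j ≥ 1`), via the
Eckart–Young characterization `σ_j(M) = min {‖M - N‖₂ : rank N < j}`. -/
noncomputable def singularValue {m n : ℕ} (M : Matrix (Fin m) (Fin n) ℂ) (j : ℕ) : ℝ :=
  sInf ((fun N : Matrix (Fin m) (Fin n) ℂ => specNorm (M - N)) '' {N | N.rank < j})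

theorem specNorm_eq_l2_opNorm {m n : ℕ} (M : Matrix (Fin m) (Fin n) ℂ) : specNorm M = ‖M‖ :=
  rfl

theorem singularValue_le_specNorm_sub {m n j : ℕ} (M N : Matrix (Fin m) (Fin n) ℂ)
    (hN : N.rank < j) : singularValue M j ≤ specNorm (M - N) :=
  csInf_le ⟨0, by rintro _ ⟨_, -, rfl⟩; exact norm_nonneg _⟩ ⟨N, hN, rfl⟩

theorem Matrix.l2_opNorm_diagonal_mul_mul_diagonal_le {𝕜 m n : Type*} [RCLike 𝕜]
    [Fintype m] [Fintype n] [DecidableEq m] [DecidableEq n]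
    (a : m → 𝕜) (M : Matrix m n 𝕜) (b : n → 𝕜) :
    ‖diagonal a * M * diagonal b‖ ≤ ‖a‖ * ‖M‖ * ‖b‖ := by
  grw [l2_opNorm_mul, l2_opNorm_mul, l2_opNorm_diagonal, l2_opNorm_diagonal]

theorem inv_add_sub_sum_eq {K : Type*} [Field K] {φ Z V : K}
    (hZ : Z + φ ≠ 0) (hV : V + φ ≠ 0) (hZV : Z + V ≠ 0) (k : ℕ) :
    (Z + V)⁻¹ - ∑ l ∈ range k,
        2 * φ / (Z + φ) * ((Z - φ) / (Z + φ)) ^ l * ((V + φ)⁻¹ * ((V - φ) / (V + φ)) ^ l)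
      = ((Z - φ) / (Z + φ)) ^ k * (Z + V)⁻¹ * ((V - φ) / (V + φ)) ^ k := by
  set r := (Z - φ) / (Z + φ) * ((V - φ) / (V + φ))
  have hterm : ∀ l, 2 * φ / (Z + φ) * ((Z - φ) / (Z + φ)) ^ l *
      ((V + φ)⁻¹ * ((V - φ) / (V + φ)) ^ l) = (Z + V)⁻¹ * (r ^ l * (1 - r)) := by
    intro l
    simp only [r, mul_pow]
    field_simp
    ring
  rw [sum_congr rfl fun l _ => hterm l, ← mul_sum, ← sum_mul, geom_sum_mul_neg]
  simp only [r, mul_pow]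
  ring

theorem exists_rank_le_cauchy_sub_eq_diagonal_mul_mul_diagonal {K m n : Type*} [Field K]
    [Fintype m] [Fintype n] [DecidableEq m] [DecidableEq n] {φ : K} {z : m → K} {v : n → K}
    (hz : ∀ i, z i + φ ≠ 0) (hv : ∀ j, v j + φ ≠ 0) (hzv : ∀ i j, z i + v j ≠ 0) (k : ℕ) :
    ∃ N : Matrix m n K, N.rank ≤ k ∧
      of (fun i j => (z i + v j)⁻¹) - N =
        diagonal (fun i => ((z i - φ) / (z i + φ)) ^ k) * of (fun i j => (z i + v j)⁻¹) *
          diagonal (fun j => ((v j - φ) / (v j + φ)) ^ k) := by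
  let P : Matrix m (Fin k) K := of fun i l => 2 * φ / (z i + φ) * ((z i - φ) / (z i + φ)) ^ (l : ℕ)
  let Q : Matrix (Fin k) n K := of fun l j => (v j + φ)⁻¹ * ((v j - φ) / (v j + φ)) ^ (l : ℕ)
  refine ⟨P * Q,
    (rank_mul_le_left P Q).trans ((rank_le_card_width P).trans_eq (Fintype.card_fin k)), ?_⟩
  ext i j
  have := inv_add_sub_sum_eq (hz i) (hv j) (hzv i j) k
  rw [sum_range] at this
  rw [Matrix.sub_apply, mul_diagonal, diagonal_mul, mul_apply]
  simpa only [P, Q, of_apply] using this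

theorem Complex.re_pos_of_norm_sub_le {z₀ η : ℝ} (hη : η < z₀) {u : ℂ}
    (hu : ‖u - z₀‖ ≤ η) : 0 < u.re := by
  have := (abs_le.mp ((abs_re_le_norm (u - z₀)).trans hu)).1
  simp only [sub_re, ofReal_re] at this
  linarith

theorem norm_sub_div_add_le_of_norm_sub_le {z₀ η φ : ℝ} (hz₀ : 0 < z₀) (hφ : 0 ≤ φ)
    (hφη : φ ^ 2 + η ^ 2 = z₀ ^ 2) {u : ℂ} (hu : ‖u - z₀‖ ≤ η) :
    ‖(u - φ) / (u + φ)‖ ≤ Real.sqrt ((z₀ - φ) / (z₀ + φ)) := by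
  have hdisk : (u.re - z₀) ^ 2 + u.im ^ 2 ≤ η ^ 2 := by
    have := pow_le_pow_left₀ (norm_nonneg _) hu 2
    simpa only [Complex.sq_norm, Complex.normSq_apply, Complex.sub_re, Complex.sub_im,
      Complex.ofReal_re, Complex.ofReal_im, sub_zero, ← sq] using this
  -- The two sides differ by `2φ (2 z₀ Re u - ‖u‖² - φ²)`, which is `≥ 0` by `hdisk` and `hφη`.
  have hcross : ‖u - φ‖ ^ 2 * (z₀ + φ) ≤ ‖u + φ‖ ^ 2 * (z₀ - φ) := by
    simp only [Complex.sq_norm, Complex.normSq_apply, Complex.sub_re, Complex.sub_im,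
      Complex.add_re, Complex.add_im, Complex.ofReal_re, Complex.ofReal_im, sub_zero, add_zero]
    nlinarith
  rw [norm_div, ← Real.sqrt_sq (div_nonneg (norm_nonneg _) (norm_nonneg _)), div_pow]
  refine Real.sqrt_le_sqrt
    (div_le_of_le_mul₀ (by positivity) (div_nonneg (by nlinarith) (by linarith)) ?_)
  rwa [div_mul_eq_mul_div, le_div_iff₀ (by linarith), mul_comm (z₀ - φ)]

theorem exists_rank_le_l2_opNorm_cauchy_sub_le {m n : Type*} [Fintype m] [Fintype n]
    [DecidableEq m] [DecidableEq n] {z₀ η φ : ℝ} (hη : 0 ≤ η) (hz : η < z₀) (hφ : 0 ≤ φ)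
    (hφη : φ ^ 2 + η ^ 2 = z₀ ^ 2) {z : m → ℂ} {v : n → ℂ}
    (hzE : ∀ i, ‖z i - z₀‖ ≤ η) (hvE : ∀ j, ‖v j - z₀‖ ≤ η) (k : ℕ) :
    ∃ N : Matrix m n ℂ, N.rank ≤ k ∧ ‖of (fun i j => (z i + v j)⁻¹) - N‖ ≤
      ((z₀ - φ) / (z₀ + φ)) ^ k * ‖of (fun i j => (z i + v j)⁻¹)‖ := by
  have hz₀ : 0 < z₀ := hη.trans_lt hz
  have hre : ∀ u : ℂ, ‖u - z₀‖ ≤ η → 0 < u.re := fun _ => Complex.re_pos_of_norm_sub_le hz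
  have hφ_ne : ∀ u : ℂ, ‖u - z₀‖ ≤ η → u + φ ≠ 0 := fun u hu =>
    Complex.ne_zero_of_re_pos (by simpa using add_pos_of_pos_of_nonneg (hre u hu) hφ)
  obtain ⟨N, hN, hCN⟩ := exists_rank_le_cauchy_sub_eq_diagonal_mul_mul_diagonal (φ := (φ : ℂ))
    (fun i => hφ_ne _ (hzE i)) (fun j => hφ_ne _ (hvE j))
    (fun i j => Complex.ne_zero_of_re_pos (by simpa using add_pos (hre _ (hzE i)) (hre _ (hvE j))))
    k
  set τ := Real.sqrt ((z₀ - φ) / (z₀ + φ))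
  have hg : ∀ u : ℂ, ‖u - z₀‖ ≤ η → ‖((u - φ) / (u + φ)) ^ k‖ ≤ τ ^ k := fun u hu => by
    rw [norm_pow]
    exact pow_le_pow_left₀ (norm_nonneg _)
      (norm_sub_div_add_le_of_norm_sub_le hz₀ hφ hφη hu) k
  have hττ : τ ^ k * τ ^ k = ((z₀ - φ) / (z₀ + φ)) ^ k := by
    rw [← mul_pow, Real.mul_self_sqrt (div_nonneg (by nlinarith) (by linarith))]
  refine ⟨N, hN, ?_⟩
  rw [hCN, ← hττ]
  grw [l2_opNorm_diagonal_mul_mul_diagonal_le,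
    (pi_norm_le_iff_of_nonneg (by positivity)).2 fun i => hg _ (hzE i),
    (pi_norm_le_iff_of_nonneg (by positivity)).2 fun j => hg _ (hvE j)]
  exact (mul_right_comm _ _ _).le

theorem cauchy_singular_value_decay_general {m n : ℕ} (z₀ η : ℝ)
    (hη : 0 < η) (hz : η < z₀)
    (φ : ℝ) (hφ : φ = Real.sqrt (z₀ ^ 2 - η ^ 2))
    (μ₁ : ℝ) (hμ : μ₁ = (z₀ + φ) / (z₀ - φ))
    (z : Fin m → ℂ) (w : Fin n → ℂ)
    (hzE : ∀ i, ‖z i - (z₀ : ℂ)‖ ≤ η)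
    (hwE : ∀ j, ‖-(w j) - (z₀ : ℂ)‖ ≤ η)
    (C : Matrix (Fin m) (Fin n) ℂ) (hC : ∀ i j, C i j = (z i - w j)⁻¹) :
    ∀ k < n, singularValue C (k + 1) ≤ (μ₁ ^ k)⁻¹ * specNorm C := by
  intro k _
  have hφη : φ ^ 2 + η ^ 2 = z₀ ^ 2 := by
    rw [hφ, Real.sq_sqrt (by nlinarith)]; ring
  have hC' : C = of fun i j => (z i + -w j)⁻¹ := by ext i j; simp [hC, sub_eq_add_neg]
  obtain ⟨N, hN, hCN⟩ := exists_rank_le_l2_opNorm_cauchy_sub_le hη.le hz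
    (hφ ▸ Real.sqrt_nonneg _) hφη hzE hwE k
  rw [← hC'] at hCN
  calc singularValue C (k + 1) ≤ specNorm (C - N) :=
        singularValue_le_specNorm_sub C N (Nat.lt_succ_of_le hN)
    _ ≤ ((z₀ - φ) / (z₀ + φ)) ^ k * specNorm C := by
        simpa only [specNorm_eq_l2_opNorm] using hCN
    _ = (μ₁ ^ k)⁻¹ * specNorm C := by rw [hμ, ← inv_div, inv_pow]

/-- **Geometric decay of the singular values of a Cauchy matrix with nodes in opposite
disks.**  If `C_{ij} = 1/(zᵢ - wⱼ)` with `zᵢ ∈ E = {z : |z - z₀| ≤ η}`, `wⱼ ∈ -E`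
(`0 < η < z₀`, `m ≥ n`), `φ = √(z₀² - η²)`, `μ₁ = (z₀ + φ)/(z₀ - φ)`, then
`σ_{k+1}(C) ≤ μ₁^{-k} ‖C‖₂` for all `0 ≤ k < n`. -/
theorem cauchy_singular_value_decay {m n : ℕ} (hmn : n ≤ m) (z₀ η : ℝ)
    (hη : 0 < η) (hz : η < z₀)
    (φ : ℝ) (hφ : φ = Real.sqrt (z₀ ^ 2 - η ^ 2))
    (μ₁ : ℝ) (hμ : μ₁ = (z₀ + φ) / (z₀ - φ))
    (z : Fin m → ℂ) (w : Fin n → ℂ)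
    (hzE : ∀ i, ‖z i - (z₀ : ℂ)‖ ≤ η)
    (hwE : ∀ j, ‖-(w j) - (z₀ : ℂ)‖ ≤ η)
    (C : Matrix (Fin m) (Fin n) ℂ) (hC : ∀ i j, C i j = (z i - w j)⁻¹) :
    ∀ k < n, singularValue C (k + 1) ≤ (μ₁ ^ k)⁻¹ * specNorm C :=
  cauchy_singular_value_decay_general z₀ η hη hz φ hφ μ₁ hμ z w hzE hwE C hC
end

section
/- Singular value bounds for solutions of Sylvester equations with spectra in opposite disks and a right-hand side with geometrically decaying singular values: Let E = {z ∈ ℂ : |z − z₀| ≤ η} with z₀, η ∈ ℝ and 0 < η < z₀, let φ = √(z₀² − η²), and let μ₁ = (z₀ + φ)/(z₀ − φ). Let X ∈ ℂ^{m×n} (m ≥ n) satisfy AX − XB = F, where A and B are normal matrices with all eigenvalues of A in E and all eigenvalues of B in −E. Suppose that for some constant K ≥ 1 and all 0 ≤ j < n, σ_{j+1}(F) ≤ K μ₁^{−j} ‖F‖₂. Then for every triangular number t = k(k+1)/2 with 1 ≤ t < n, σ_{t+1}(X) ≤ K · ((z₀ + η)/(z₀ − η)) · ((3/2)√t + 1)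 · μ₁^{−(√(8t+1) − 1)/2} · ‖X‖₂. -/
open Finset Filter Metric Topology
open scoped Matrix.Norms.L2Operator

noncomputable def cayley {R A : Type*} [CommRing R] [Ring A] [Algebra R A] (c : R) (a : A) : A :=
  Ring.inverse (a + algebraMap R A c) * (a - algebraMap R A c)

theorem isUnit_add_algebraMap_of_neg_notMem {R A : Type*} [CommRing R] [Ring A] [Algebra R A]
    {a : A} {c : R} (h : -c ∉ spectrum R a) : IsUnit (a + algebraMap R A c) := by
  simpa [sub_eq_add_neg, add_comm] using (spectrum.notMem_iff.mp h).neg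

theorem sum_range_sub_eq (k : ℕ) : ∑ i ∈ range k, (k - i) = k * (k + 1) / 2 := by
  have h := sum_range_reflect (fun j ↦ j) (k + 1)
  simp only [add_tsub_cancel_right, sum_range_succ, tsub_self, add_zero] at h
  rw [h, ← sum_range_succ, sum_range_id, add_tsub_cancel_right, mul_comm]

theorem sqrt_eight_mul_add_one_of_two_mul_eq {k t : ℝ} (hk : 0 ≤ k) (ht : 2 * t = k * (k + 1)) :
    √(8 * t + 1) = 2 * k + 1 := by
  rw [show 8 * t + 1 = (2 * k + 1) ^ 2 by linear_combination 4 * ht, Real.sqrt_sq (by positivity)]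

theorem le_three_halves_mul_sqrt_of_two_mul_eq {k t : ℝ} (hk : 0 ≤ k) (ht : 2 * t = k * (k + 1)) :
    k ≤ 3 / 2 * √t := by
  have : 2 * k / 3 ≤ √t := Real.le_sqrt_of_sq_le (by nlinarith)
  linarith

theorem sqrt_sq_sub_sq_lt {z₀ η : ℝ} (hη : 0 < η) (hz : η < z₀) : √(z₀ ^ 2 - η ^ 2) < z₀ :=
  (Real.sqrt_lt' (hη.trans hz)).2 (by nlinarith)

theorem two_mul_div_sq_mul_le {z₀ η φ : ℝ} (hz : η < z₀) (hη : 0 ≤ η) (hφ : 0 ≤ φ) :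
    2 * φ / (z₀ + φ - η) ^ 2 * (2 * (z₀ + η)) ≤ (z₀ + η) / (z₀ - η) := by
  have hδ : 0 < z₀ + φ - η := by linarith
  rw [div_mul_eq_mul_div, div_le_div_iff₀ (pow_pos hδ 2) (by linarith)]
  nlinarith [mul_nonneg (show (0 : ℝ) ≤ z₀ + η by linarith) (sq_nonneg (z₀ - η - φ))]

theorem sum_range_pow_mul_le_of_le_pow {ρ K L : ℝ} (hρ : 0 ≤ ρ) {k : ℕ} {s : ℕ → ℝ}
    (hs : ∀ j ≤ k, s j ≤ K * ρ ^ j * L) :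
    ∑ i ∈ range k, ρ ^ i * s (k - i) ≤ k * (K * ρ ^ k * L) := by
  refine (sum_le_card_nsmul _ _ (K * ρ ^ k * L) fun i hi ↦ ?_).trans_eq
    (by rw [card_range, nsmul_eq_mul])
  have hik := (mem_range.1 hi).le
  calc ρ ^ i * s (k - i) ≤ ρ ^ i * (K * ρ ^ (k - i) * L) := by gcongr; exact hs _ (Nat.sub_le k i)
    _ = K * ρ ^ (i + (k - i)) * L := by rw [pow_add]; ring
    _ = K * ρ ^ k * L := by rw [Nat.add_sub_cancel' hik]

namespace Matrix

variable {l m : Type*} [Fintype m]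

theorem rank_add_le {K : Type*} [Field K] (M N : Matrix l m K) :
    (M + N).rank ≤ M.rank + N.rank := by
  rw [Matrix.rank, Matrix.rank, Matrix.rank, Matrix.mulVecLin_add]
  refine le_trans (Submodule.finrank_mono ?_) (Submodule.finrank_add_le_finrank_add_finrank _ _)
  rintro x ⟨y, rfl⟩
  exact Submodule.add_mem_sup (LinearMap.mem_range_self _ y) (LinearMap.mem_range_self _ y)

theorem rank_sum_le {K ι : Type*} [Field K] (s : Finset ι) (f : ι → Matrix l m K) :
    (∑ i ∈ s, f i).rank ≤ ∑ i ∈ s, (f i).rank :=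
  le_sum_of_subadditive (fun M : Matrix l m K ↦ M.rank) rank_zero.le rank_add_le s f

variable [Fintype l] [DecidableEq l] [DecidableEq m]

theorem sub_pow_mul_mul_pow_eq_sum {R : Type*} [Ring R] (C : Matrix l l R) (D : Matrix m m R)
    (X : Matrix l m R) (k : ℕ) :
    X - C ^ k * X * D ^ k = ∑ i ∈ range k, C ^ i * (X - C * X * D) * D ^ i := by
  have step (i : ℕ) : C ^ i * (X - C * X * D) * D ^ i
      = C ^ i * X * D ^ i - C ^ (i + 1) * X * D ^ (i + 1) := by
    rw [pow_succ C, pow_succ' D]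
    simp only [Matrix.mul_sub, Matrix.sub_mul, Matrix.mul_assoc]
  simp only [step, sum_range_sub', pow_zero, Matrix.one_mul, Matrix.mul_one]

theorem sub_cayley_mul_mul_cayley_eq {R : Type*} [CommRing R] {A : Matrix l l R}
    {B : Matrix m m R} {X F : Matrix l m R} (c : R) (hX : A * X + X * B = F)
    (hA : IsUnit (A + algebraMap R _ c)) (hB : IsUnit (B + algebraMap R _ c)) :
    X - cayley c A * X * cayley c B = (2 * c) •
      (Ring.inverse (A + algebraMap R _ c) * F * Ring.inverse (B + algebraMap R _ c)) := by
  set a := algebraMap R (Matrix l l R) c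
  set b := algebraMap R (Matrix m m R) c
  have hC : (A + a) * cayley c A = A - a := by
    rw [cayley, ← mul_assoc, Ring.mul_inverse_cancel _ hA, one_mul]
  have hD : cayley c B * (B + b) = B - b := by
    have hcomm : Commute (B - b) (B + b) :=
      ((Commute.refl B).sub_left (Algebra.commute_algebraMap_left c B)).add_right
        ((Algebra.commute_algebraMap_right c B).sub_left (Commute.refl b))
    rw [cayley, mul_assoc, hcomm.eq, ← mul_assoc, Ring.inverse_mul_cancel _ hB, one_mul]
  have key : (A + a) * (X - cayley c A * X * cayley c B) * (B + b) = (2 * c) • F := by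
    calc _ = (A + a) * X * (B + b) - ((A + a) * cayley c A) * X * (cayley c B * (B + b)) := by
          simp only [Matrix.mul_sub, Matrix.sub_mul, Matrix.mul_assoc]
      -- `(A + c) X (B + c) - (A - c) X (B - c) = 2c (AX + XB)`
      _ = (2 * c) • F := by
          rw [hC, hD, ← hX]
          simp only [a, b, Algebra.algebraMap_eq_smul_one, Matrix.add_mul, Matrix.mul_add,
            Matrix.sub_mul, Matrix.mul_sub, Matrix.smul_mul, Matrix.mul_smul, Matrix.one_mul,
            Matrix.mul_one, Matrix.mul_assoc]
          module
  calc X - cayley c A * X * cayley c B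
      = Ring.inverse (A + a) * ((A + a) * (X - cayley c A * X * cayley c B) * (B + b)) *
          Ring.inverse (B + b) := by
        simp only [← Matrix.mul_assoc, Ring.inverse_mul_cancel _ hA, Matrix.one_mul]
        simp only [Matrix.mul_assoc, Ring.mul_inverse_cancel _ hB, Matrix.mul_one]
    _ = _ := by rw [key, Matrix.mul_smul, Matrix.smul_mul]

theorem l2_opNorm_pow_mul_mul_pow_le {𝕜 : Type*} [RCLike 𝕜] {C : Matrix l l 𝕜}
    {D : Matrix m m 𝕜} {ρ : ℝ} (hρ : ‖C‖ * ‖D‖ ≤ ρ) (Y : Matrix l m 𝕜) (i : ℕ) :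
    ‖C ^ i * Y * D ^ i‖ ≤ ρ ^ i * ‖Y‖ := by
  have hρ₀ : 0 ≤ ρ := (by positivity : (0 : ℝ) ≤ ‖C‖ * ‖D‖).trans hρ
  induction i with
  | zero => simp
  | succ i ih =>
    calc ‖C ^ (i + 1) * Y * D ^ (i + 1)‖ = ‖C * (C ^ i * Y * D ^ i) * D‖ := by
          rw [pow_succ' C, pow_succ D]; simp only [Matrix.mul_assoc]
      _ ≤ ‖C‖ * ‖C ^ i * Y * D ^ i‖ * ‖D‖ :=
          (l2_opNorm_mul _ _).trans (by gcongr; exact l2_opNorm_mul _ _)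
      _ = ‖C‖ * ‖D‖ * ‖C ^ i * Y * D ^ i‖ := by ring
      _ ≤ ρ * (ρ ^ i * ‖Y‖) := by gcongr
      _ = ρ ^ (i + 1) * ‖Y‖ := by ring

theorem l2_opNorm_mul_add_mul_le {𝕜 : Type*} [RCLike 𝕜] (A : Matrix l l 𝕜) (B : Matrix m m 𝕜)
    (X : Matrix l m 𝕜) : ‖A * X + X * B‖ ≤ (‖A‖ + ‖B‖) * ‖X‖ :=
  calc ‖A * X + X * B‖ ≤ ‖A‖ * ‖X‖ + ‖X‖ * ‖B‖ :=
        (norm_add_le _ _).trans (add_le_add (l2_opNorm_mul _ _) (l2_opNorm_mul _ _))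
    _ = (‖A‖ + ‖B‖) * ‖X‖ := by ring

end Matrix

theorem Complex.norm_sub_ofReal_le_of_norm_sub_le {z₀ η φ : ℝ} (hz₀ : 0 < z₀) (hφ₀ : 0 ≤ φ)
    (hφ : φ ^ 2 = z₀ ^ 2 - η ^ 2) {w : ℂ} (hw : ‖w - z₀‖ ≤ η) :
    ‖w - φ‖ ≤ √((z₀ - φ) / (z₀ + φ)) * ‖w + φ‖ := by
  have hz₀φ : 0 < z₀ + φ := by linarith
  have hsq (u : ℂ) : ‖u‖ ^ 2 = u.re ^ 2 + u.im ^ 2 := by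
    rw [Complex.sq_norm, Complex.normSq_apply]; ring
  have hwE : (w.re - z₀) ^ 2 + w.im ^ 2 ≤ η ^ 2 := by
    have := pow_le_pow_left₀ (norm_nonneg _) hw 2
    rwa [hsq, Complex.sub_re, Complex.sub_im, Complex.ofReal_re, Complex.ofReal_im,
      sub_zero] at this
  refine le_of_pow_le_pow_left₀ two_ne_zero (by positivity) ?_
  rw [mul_pow, Real.sq_sqrt (div_nonneg (by nlinarith) hz₀φ.le), hsq, hsq, div_mul_eq_mul_div,
    le_div_iff₀ hz₀φ]
  simp only [Complex.add_re, Complex.sub_re, Complex.add_im, Complex.sub_im,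
    Complex.ofReal_re, Complex.ofReal_im, sub_zero, add_zero]
  -- `(z₀ - φ) ‖w + φ‖² - (z₀ + φ) ‖w - φ‖² = 2φ (η² - ‖w - z₀‖²)`
  nlinarith [mul_nonneg hφ₀ (sub_nonneg.mpr hwE)]

theorem Complex.sub_le_norm_add_ofReal {z₀ η φ : ℝ} {w : ℂ} (hw : ‖w - z₀‖ ≤ η) :
    z₀ + φ - η ≤ ‖w + φ‖ := by
  have h := norm_sub_norm_le (((z₀ + φ : ℝ) : ℂ)) (-(w - z₀))
  rw [Complex.norm_real, norm_neg] at h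
  calc z₀ + φ - η ≤ ‖z₀ + φ‖ - ‖w - z₀‖ := by linarith [Real.le_norm_self (z₀ + φ)]
    _ ≤ _ := h.trans_eq (by push_cast; ring_nf)

theorem Complex.add_ofReal_ne_zero_of_norm_sub_le {z₀ η φ : ℝ} (hηφ : η < z₀ + φ) {w : ℂ}
    (hw : ‖w - z₀‖ ≤ η) : w + φ ≠ 0 := by
  intro h0
  have := Complex.sub_le_norm_add_ofReal (φ := φ) hw
  rw [h0, norm_zero] at this
  linarith

theorem isUnit_add_of_spectrum_subset_closedBall {A : Type*} [Ring A] [Algebra ℂ A] {a : A}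
    {z₀ η φ : ℝ} (h : spectrum ℂ a ⊆ closedBall (z₀ : ℂ) η) (hηφ : η < z₀ + φ) :
    IsUnit (a + algebraMap ℂ A φ) :=
  isUnit_add_algebraMap_of_neg_notMem fun hmem ↦
    Complex.add_ofReal_ne_zero_of_norm_sub_le hηφ (mem_closedBall_iff_norm.1 (h hmem))
      (neg_add_cancel _)

section CStarAlgebra

variable {𝒜 : Type*} [CStarAlgebra 𝒜] {a : 𝒜} [IsStarNormal a]

theorem cfc_inv_add_eq {c : ℂ} (h : ∀ z ∈ spectrum ℂ a, z + c ≠ 0) :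
    cfc (fun z ↦ (z + c)⁻¹) a = Ring.inverse (a + algebraMap ℂ 𝒜 c) := by
  rw [cfc_inv (fun z ↦ z + c) a h, cfc_add_const c (fun z ↦ z) a, cfc_id' ℂ a]

theorem cfc_cayley_eq {c : ℂ} (h : ∀ z ∈ spectrum ℂ a, z + c ≠ 0) :
    cfc (fun z ↦ (z + c)⁻¹ * (z - c)) a = cayley c a := by
  have hcont : ContinuousOn (fun z : ℂ ↦ (z + c)⁻¹) (spectrum ℂ a) :=
    (continuousOn_id.add continuousOn_const).inv₀ h
  rw [cfc_mul _ _ a hcont, cfc_inv_add_eq h, cfc_sub (fun z ↦ z) (fun _ ↦ c) a, cfc_id' ℂ a,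
    cfc_const c a, cayley]

theorem norm_le_of_spectrum_subset_closedBall {w₀ : ℂ} {η : ℝ} (hη : 0 ≤ η)
    (h : spectrum ℂ a ⊆ closedBall w₀ η) : ‖a‖ ≤ ‖w₀‖ + η := by
  rw [← cfc_id' ℂ a]
  refine norm_cfc_le (by positivity) fun z hz ↦ ?_
  linarith [norm_le_norm_add_norm_sub' z w₀, mem_closedBall_iff_norm.1 (h hz)]

variable {z₀ η φ : ℝ}

theorem norm_ringInverse_add_le_of_spectrum_subset_closedBall
    (h : spectrum ℂ a ⊆ closedBall (z₀ : ℂ) η) (hηφ : η < z₀ + φ) :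
    ‖Ring.inverse (a + algebraMap ℂ 𝒜 φ)‖ ≤ (z₀ + φ - η)⁻¹ := by
  have hδ : 0 < z₀ + φ - η := by linarith
  rw [← cfc_inv_add_eq fun z hz ↦
    Complex.add_ofReal_ne_zero_of_norm_sub_le hηφ (mem_closedBall_iff_norm.1 (h hz))]
  refine norm_cfc_le (inv_nonneg.2 hδ.le) fun z hz ↦ ?_
  rw [norm_inv]
  exact inv_anti₀ hδ (Complex.sub_le_norm_add_ofReal (mem_closedBall_iff_norm.1 (h hz)))

theorem norm_cayley_le_of_spectrum_subset_closedBall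
    (h : spectrum ℂ a ⊆ closedBall (z₀ : ℂ) η) (hz₀ : 0 < z₀) (hφ₀ : 0 ≤ φ)
    (hφ : φ ^ 2 = z₀ ^ 2 - η ^ 2) (hηφ : η < z₀ + φ) :
    ‖cayley (φ : ℂ) a‖ ≤ √((z₀ - φ) / (z₀ + φ)) := by
  have hne (z : ℂ) (hz : z ∈ spectrum ℂ a) : z + φ ≠ 0 :=
    Complex.add_ofReal_ne_zero_of_norm_sub_le hηφ (mem_closedBall_iff_norm.1 (h hz))
  rw [← cfc_cayley_eq hne]
  refine norm_cfc_le (Real.sqrt_nonneg _) fun z hz ↦ ?_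
  rw [norm_mul, norm_inv, inv_mul_le_iff₀ (norm_pos_iff.2 (hne z hz)), mul_comm ‖z + φ‖]
  exact Complex.norm_sub_ofReal_le_of_norm_sub_le hz₀ hφ₀ hφ (mem_closedBall_iff_norm.1 (h hz))

end CStarAlgebra

section SingularValue

variable {m n : ℕ}

theorem specNorm_eq_norm (M : Matrix (Fin m) (Fin n) ℂ) : specNorm M = ‖M‖ := by
  rw [Matrix.l2_opNorm_def]; rfl

theorem singularValue_nonneg (M : Matrix (Fin m) (Fin n) ℂ) (j : ℕ) : 0 ≤ singularValue M j :=
  Real.sInf_nonneg (by rintro _ ⟨N, -, rfl⟩; exact norm_nonneg _)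

theorem singularValue_le_norm_sub (M : Matrix (Fin m) (Fin n) ℂ) {N : Matrix (Fin m) (Fin n) ℂ}
    {r : ℕ} (hN : N.rank ≤ r) : singularValue M (r + 1) ≤ ‖M - N‖ := by
  rw [← specNorm_eq_norm]
  refine csInf_le ⟨0, ?_⟩ ⟨N, Nat.lt_succ_of_le hN, rfl⟩
  rintro _ ⟨N', -, rfl⟩
  simp only [specNorm_eq_norm, norm_nonneg]

theorem exists_rank_le_norm_sub_lt (M : Matrix (Fin m) (Fin n) ℂ) (r : ℕ) {ε : ℝ} (hε : 0 < ε) :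
    ∃ N : Matrix (Fin m) (Fin n) ℂ, N.rank ≤ r ∧ ‖M - N‖ < singularValue M (r + 1) + ε := by
  have hne : ((fun N ↦ specNorm (M - N)) ''
      {N : Matrix (Fin m) (Fin n) ℂ | N.rank < r + 1}).Nonempty :=
    ⟨_, 0, by simp [Matrix.rank_zero], rfl⟩
  obtain ⟨_, ⟨N, hN, rfl⟩, hlt⟩ :=
    exists_lt_of_csInf_lt hne (lt_add_of_pos_right (singularValue M (r + 1)) hε)
  exact ⟨N, Nat.le_of_lt_succ hN, by simpa [specNorm_eq_norm] using hlt⟩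

variable {C : Matrix (Fin m) (Fin m) ℂ} {D : Matrix (Fin n) (Fin n) ℂ}
  {P : Matrix (Fin m) (Fin m) ℂ} {Q : Matrix (Fin n) (Fin n) ℂ} {X F : Matrix (Fin m) (Fin n) ℂ}
  {ρ : ℝ}

theorem singularValue_le_of_sub_mul_mul_eq_of_rank_le (hXF : X - C * X * D = P * F * Q)
    (hρ : ‖C‖ * ‖D‖ ≤ ρ) (k : ℕ) (r : ℕ → ℕ) (N : ℕ → Matrix (Fin m) (Fin n) ℂ)
    (hN : ∀ i, (N i).rank ≤ r i) :
    singularValue X (∑ i ∈ range k, r i + 1) ≤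
      ρ ^ k * ‖X‖ + ‖P‖ * ‖Q‖ * ∑ i ∈ range k, ρ ^ i * ‖F - N i‖ := by
  have hρ₀ : 0 ≤ ρ := (by positivity : (0 : ℝ) ≤ ‖C‖ * ‖D‖).trans hρ
  set Nₓ := ∑ i ∈ range k, C ^ i * (P * N i * Q) * D ^ i
  have hrank : Nₓ.rank ≤ ∑ i ∈ range k, r i := by
    refine (Matrix.rank_sum_le _ _).trans (sum_le_sum fun i _ ↦ ?_)
    calc (C ^ i * (P * N i * Q) * D ^ i).rank ≤ (P * N i * Q).rank :=
          (Matrix.rank_mul_le_left _ _).trans (Matrix.rank_mul_le_right _ _)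
      _ ≤ (N i).rank := (Matrix.rank_mul_le_left _ _).trans (Matrix.rank_mul_le_right _ _)
      _ ≤ r i := hN i
  have hdecomp :
      X - Nₓ = C ^ k * X * D ^ k + ∑ i ∈ range k, C ^ i * (P * (F - N i) * Q) * D ^ i := by
    rw [show X - Nₓ = C ^ k * X * D ^ k + ((X - C ^ k * X * D ^ k) - Nₓ) by abel,
      Matrix.sub_pow_mul_mul_pow_eq_sum, hXF]
    simp only [Nₓ, ← sum_sub_distrib, Matrix.mul_sub, Matrix.sub_mul]
  calc singularValue X (∑ i ∈ range k, r i + 1) ≤ ‖X - Nₓ‖ := singularValue_le_norm_sub X hrank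
    _ ≤ ‖C ^ k * X * D ^ k‖ + ∑ i ∈ range k, ‖C ^ i * (P * (F - N i) * Q) * D ^ i‖ := by
        rw [hdecomp]; exact (norm_add_le _ _).trans (by gcongr; exact norm_sum_le _ _)
    _ ≤ ρ ^ k * ‖X‖ + ∑ i ∈ range k, ρ ^ i * (‖P‖ * ‖F - N i‖ * ‖Q‖) := by
        gcongr with i
        · exact Matrix.l2_opNorm_pow_mul_mul_pow_le hρ X k
        · refine (Matrix.l2_opNorm_pow_mul_mul_pow_le hρ _ i).trans ?_
          gcongr
          exact (Matrix.l2_opNorm_mul _ _).trans (by gcongr; exact Matrix.l2_opNorm_mul _ _)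
    _ = ρ ^ k * ‖X‖ + ‖P‖ * ‖Q‖ * ∑ i ∈ range k, ρ ^ i * ‖F - N i‖ := by
        rw [mul_sum]; congr 1; exact sum_congr rfl fun i _ ↦ by ring

theorem singularValue_le_of_sub_mul_mul_eq (hXF : X - C * X * D = P * F * Q)
    (hρ : ‖C‖ * ‖D‖ ≤ ρ) (k : ℕ) (r : ℕ → ℕ) :
    singularValue X (∑ i ∈ range k, r i + 1) ≤
      ρ ^ k * ‖X‖ + ‖P‖ * ‖Q‖ * ∑ i ∈ range k, ρ ^ i * singularValue F (r i + 1) := by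
  set bound : ℝ → ℝ := fun ε ↦
    ρ ^ k * ‖X‖ + ‖P‖ * ‖Q‖ * ∑ i ∈ range k, ρ ^ i * (singularValue F (r i + 1) + ε)
  have hρ₀ : 0 ≤ ρ := (by positivity : (0 : ℝ) ≤ ‖C‖ * ‖D‖).trans hρ
  have hbound : ∀ ε > 0, singularValue X (∑ i ∈ range k, r i + 1) ≤ bound ε := by
    intro ε hε
    choose N hNrank hNnorm using fun i ↦ exists_rank_le_norm_sub_lt F (r i) hε
    refine (singularValue_le_of_sub_mul_mul_eq_of_rank_le hXF hρ k r N hNrank).trans ?_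
    dsimp only [bound]
    gcongr with i
    exact (hNnorm i).le
  have hcont : Tendsto bound (𝓝[>] 0) (𝓝 (bound 0)) :=
    ((by fun_prop : Continuous bound).tendsto 0).mono_left nhdsWithin_le_nhds
  simpa [bound] using ge_of_tendsto hcont (eventually_nhdsWithin_of_forall hbound)

end SingularValue

theorem singularValue_le_of_sylvester_of_spectrum_subset_closedBall {m n : ℕ} {z₀ η φ : ℝ}
    (hη : 0 < η) (hz : η < z₀) (hφ : φ = √(z₀ ^ 2 - η ^ 2))
    {A : Matrix (Fin m) (Fin m) ℂ} {B : Matrix (Fin n) (Fin n) ℂ} [IsStarNormal A]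
    [IsStarNormal B] (hA : spectrum ℂ A ⊆ closedBall (z₀ : ℂ) η)
    (hB : spectrum ℂ B ⊆ closedBall (z₀ : ℂ) η) {X F : Matrix (Fin m) (Fin n) ℂ}
    (hX : A * X + X * B = F) (k : ℕ) (r : ℕ → ℕ) :
    singularValue X (∑ i ∈ range k, r i + 1) ≤
      ((z₀ - φ) / (z₀ + φ)) ^ k * ‖X‖ + 2 * φ / (z₀ + φ - η) ^ 2 *
        ∑ i ∈ range k, ((z₀ - φ) / (z₀ + φ)) ^ i * singularValue F (r i + 1) := by
  have hz₀ : 0 < z₀ := hη.trans hz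
  have hφ₀ : 0 ≤ φ := hφ ▸ Real.sqrt_nonneg _
  have hφ2 : φ ^ 2 = z₀ ^ 2 - η ^ 2 := hφ ▸ Real.sq_sqrt (by nlinarith)
  have hηφ : η < z₀ + φ := by linarith
  have hstein := Matrix.sub_cayley_mul_mul_cayley_eq (φ : ℂ) hX
    (isUnit_add_of_spectrum_subset_closedBall hA hηφ)
    (isUnit_add_of_spectrum_subset_closedBall hB hηφ)
  rw [← Matrix.smul_mul, ← Matrix.smul_mul] at hstein
  have hCD : ‖cayley (φ : ℂ) A‖ * ‖cayley (φ : ℂ) B‖ ≤ (z₀ - φ) / (z₀ + φ) := by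
    rw [← Real.mul_self_sqrt (div_nonneg (by nlinarith) (by linarith) : 0 ≤ (z₀ - φ) / (z₀ + φ))]
    exact mul_le_mul (norm_cayley_le_of_spectrum_subset_closedBall hA hz₀ hφ₀ hφ2 hηφ)
      (norm_cayley_le_of_spectrum_subset_closedBall hB hz₀ hφ₀ hφ2 hηφ) (norm_nonneg _)
      (Real.sqrt_nonneg _)
  refine (singularValue_le_of_sub_mul_mul_eq hstein hCD k r).trans ?_
  have hsum₀ : 0 ≤ ∑ i ∈ range k, ((z₀ - φ) / (z₀ + φ)) ^ i * singularValue F (r i + 1) :=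
    sum_nonneg fun i _ ↦ mul_nonneg (pow_nonneg (div_nonneg (by nlinarith) (by linarith)) i)
      (singularValue_nonneg F _)
  gcongr
  rw [norm_smul, div_eq_mul_inv, pow_two, mul_inv, ← mul_assoc]
  gcongr
  · simp [abs_of_nonneg hφ₀]
  · exact norm_ringInverse_add_le_of_spectrum_subset_closedBall hA hηφ
  · exact norm_ringInverse_add_le_of_spectrum_subset_closedBall hB hηφ

theorem singularValue_le_of_sylvester_of_geometric_decay {m n : ℕ} {z₀ η φ : ℝ}
    (hη : 0 < η) (hz : η < z₀) (hφ : φ = √(z₀ ^ 2 - η ^ 2))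
    {A : Matrix (Fin m) (Fin m) ℂ} {B : Matrix (Fin n) (Fin n) ℂ} [IsStarNormal A]
    [IsStarNormal B] (hA : spectrum ℂ A ⊆ closedBall (z₀ : ℂ) η)
    (hB : spectrum ℂ B ⊆ closedBall (z₀ : ℂ) η) {X F : Matrix (Fin m) (Fin n) ℂ}
    (hX : A * X + X * B = F) {K : ℝ} (hK : 1 ≤ K) (k : ℕ)
    (hF : ∀ j ≤ k, singularValue F (j + 1) ≤ K * ((z₀ - φ) / (z₀ + φ)) ^ j * ‖F‖) :
    singularValue X (k * (k + 1) / 2 + 1) ≤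
      K * ((z₀ + η) / (z₀ - η)) * (k + 1) * ((z₀ - φ) / (z₀ + φ)) ^ k * ‖X‖ := by
  have hz₀ : 0 < z₀ := hη.trans hz
  have hφ₀ : 0 ≤ φ := hφ ▸ Real.sqrt_nonneg _
  have hφz : φ < z₀ := hφ ▸ sqrt_sq_sub_sq_lt hη hz
  have hbound := singularValue_le_of_sylvester_of_spectrum_subset_closedBall hη hz hφ hA hB hX
    k (fun i ↦ k - i)
  rw [sum_range_sub_eq] at hbound
  have hFX : ‖F‖ ≤ 2 * (z₀ + η) * ‖X‖ := by
    have hnA := norm_le_of_spectrum_subset_closedBall hη.le hA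
    have hnB := norm_le_of_spectrum_subset_closedBall hη.le hB
    rw [Complex.norm_real, Real.norm_of_nonneg hz₀.le] at hnA hnB
    rw [← hX]
    exact (Matrix.l2_opNorm_mul_add_mul_le A B X).trans (by gcongr; linarith)
  have hc := two_mul_div_sq_mul_le hz hη.le hφ₀
  set q := (z₀ - φ) / (z₀ + φ)
  set c := 2 * φ / (z₀ + φ - η) ^ 2
  set r := (z₀ + η) / (z₀ - η)
  have hq₀ : 0 ≤ q := div_nonneg (by linarith) (by linarith)
  have hc₀ : 0 ≤ c := div_nonneg (by linarith) (sq_nonneg _)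
  have hr : 1 ≤ r := by rw [le_div_iff₀ (by linarith)]; linarith
  calc singularValue X (k * (k + 1) / 2 + 1)
      ≤ q ^ k * ‖X‖ + c * ∑ i ∈ range k, q ^ i * singularValue F (k - i + 1) := hbound
    _ ≤ q ^ k * ‖X‖ + c * (k * (K * q ^ k * (2 * (z₀ + η) * ‖X‖))) := by
        gcongr
        exact (sum_range_pow_mul_le_of_le_pow hq₀ (s := fun j ↦ singularValue F (j + 1)) hF).trans
          (by gcongr)
    _ = q ^ k * ‖X‖ * (1 + k * K * (c * (2 * (z₀ + η)))) := by ring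
    _ ≤ q ^ k * ‖X‖ * (K * r + k * K * r) := by gcongr; nlinarith
    _ = K * r * (k + 1) * q ^ k * ‖X‖ := by ring

theorem sylvester_singular_values_opposite_disks_general {m n : ℕ}
    (z₀ η : ℝ) (hη : 0 < η) (hz : η < z₀)
    (φ : ℝ) (hφ : φ = Real.sqrt (z₀ ^ 2 - η ^ 2))
    (μ₁ : ℝ) (hμ : μ₁ = (z₀ + φ) / (z₀ - φ))
    (A : Matrix (Fin m) (Fin m) ℂ) (B : Matrix (Fin n) (Fin n) ℂ)
    (hA : A * A.conjTranspose = A.conjTranspose * A)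
    (hB : B * B.conjTranspose = B.conjTranspose * B)
    (hspecA : spectrum ℂ A ⊆ {z : ℂ | ‖z - (z₀ : ℂ)‖ ≤ η})
    (hspecB : spectrum ℂ B ⊆ {z : ℂ | ‖-z - (z₀ : ℂ)‖ ≤ η})
    (F X : Matrix (Fin m) (Fin n) ℂ) (hX : A * X - X * B = F)
    (K : ℝ) (hK : 1 ≤ K)
    (hF : ∀ j < n, singularValue F (j + 1) ≤ K * (μ₁ ^ j)⁻¹ * specNorm F)
    (k t : ℕ) (htk : t = k * (k + 1) / 2) (htn : t < n) :
    singularValue X (t + 1) ≤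
      K * ((z₀ + η) / (z₀ - η)) * ((3 / 2) * Real.sqrt t + 1) *
        μ₁ ^ (-(Real.sqrt (8 * (t : ℝ) + 1) - 1) / 2) * specNorm X := by
  have : IsStarNormal A := ⟨hA.symm⟩
  have : IsStarNormal B := ⟨hB.symm⟩
  have hA' : spectrum ℂ A ⊆ closedBall (z₀ : ℂ) η := fun z hz ↦
    mem_closedBall_iff_norm.2 (hspecA hz)
  have hB' : spectrum ℂ (-B) ⊆ closedBall (z₀ : ℂ) η := by
    rw [← spectrum.neg_eq]
    exact fun z hz ↦ mem_closedBall_iff_norm.2 (by simpa using hspecB hz)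
  have hX' : A * X + X * -B = F := by rwa [Matrix.mul_neg, ← sub_eq_add_neg]
  have h2t : 2 * t = k * (k + 1) := htk ▸ Nat.mul_div_cancel' (Nat.even_mul_succ_self k).two_dvd
  have h2t' : 2 * (t : ℝ) = k * (k + 1) := by exact_mod_cast h2t
  have hkn : k < n := by nlinarith
  have hq : (z₀ - φ) / (z₀ + φ) = μ₁⁻¹ := by rw [hμ, inv_div]
  have hF' (j : ℕ) (hj : j ≤ k) :
      singularValue F (j + 1) ≤ K * ((z₀ - φ) / (z₀ + φ)) ^ j * ‖F‖ := by
    rw [hq, inv_pow, ← specNorm_eq_norm]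
    exact hF j (by omega)
  have key := singularValue_le_of_sylvester_of_geometric_decay hη hz hφ hA' hB' hX' hK k hF'
  have hφ₀ : 0 ≤ φ := hφ ▸ Real.sqrt_nonneg _
  have hμ₀ : 0 ≤ μ₁ := hμ ▸ div_nonneg (by linarith) (by linarith [sqrt_sq_sub_sq_lt hη hz])
  rw [← htk, hq, inv_pow] at key
  rw [sqrt_eight_mul_add_one_of_two_mul_eq (Nat.cast_nonneg k) h2t',
    show -(2 * (k : ℝ) + 1 - 1) / 2 = -(k : ℝ) by ring, Real.rpow_neg hμ₀, Real.rpow_natCast,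
    specNorm_eq_norm]
  refine key.trans ?_
  gcongr
  · exact mul_nonneg (by linarith) (div_nonneg (by linarith) (by linarith))
  · exact le_three_halves_mul_sqrt_of_two_mul_eq (Nat.cast_nonneg k) h2t'

/-- **Singular value bounds for Sylvester equations with spectra in opposite disks and a
right-hand side with geometrically decaying singular values.**
If `AX - XB = F` with `A, B` normal, `λ(A) ⊆ E = {z : |z - z₀| ≤ η}`, `λ(B) ⊆ -E`
(`0 < η < z₀`), `φ = √(z₀² - η²)`, `μ₁ = (z₀ + φ)/(z₀ - φ)`, and
`σ_{j+1}(F) ≤ K μ₁^{-j} ‖F‖₂` for all `0 ≤ j < n` with `K ≥ 1`, then for each triangular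
number `t = k(k+1)/2` with `1 ≤ t < n`,
`σ_{t+1}(X) ≤ K ((z₀+η)/(z₀-η)) ((3/2)√t + 1) μ₁^{-(√(8t+1)-1)/2} ‖X‖₂`. -/
theorem sylvester_singular_values_opposite_disks {m n : ℕ} (hmn : n ≤ m)
    (z₀ η : ℝ) (hη : 0 < η) (hz : η < z₀)
    (φ : ℝ) (hφ : φ = Real.sqrt (z₀ ^ 2 - η ^ 2))
    (μ₁ : ℝ) (hμ : μ₁ = (z₀ + φ) / (z₀ - φ))
    (A : Matrix (Fin m) (Fin m) ℂ) (B : Matrix (Fin n) (Fin n) ℂ)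
    (hA : A * A.conjTranspose = A.conjTranspose * A)
    (hB : B * B.conjTranspose = B.conjTranspose * B)
    (hspecA : spectrum ℂ A ⊆ {z : ℂ | ‖z - (z₀ : ℂ)‖ ≤ η})
    (hspecB : spectrum ℂ B ⊆ {z : ℂ | ‖-z - (z₀ : ℂ)‖ ≤ η})
    (F X : Matrix (Fin m) (Fin n) ℂ) (hX : A * X - X * B = F)
    (K : ℝ) (hK : 1 ≤ K)
    (hF : ∀ j < n, singularValue F (j + 1) ≤ K * (μ₁ ^ j)⁻¹ * specNorm F)
    (k t : ℕ) (htk : t = k * (k + 1) / 2) (ht1 : 1 ≤ t) (htn : t < n) :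
    singularValue X (t + 1) ≤
      K * ((z₀ + η) / (z₀ - η)) * ((3 / 2) * Real.sqrt t + 1) *
        μ₁ ^ (-(Real.sqrt (8 * (t : ℝ) + 1) - 1) / 2) * specNorm X :=
  sylvester_singular_values_opposite_disks_general z₀ η hη hz φ hφ μ₁ hμ A B hA hB hspecA hspecB F X
    hX K hK hF k t htk htn
end

section
/- ADI error bound for diagonalizable (possibly nonnormal) coefficient matrices: Let A ∈ ℂ^{m×m} and B ∈ ℂ^{n×n} be diagonalizable with eigendecompositions A = V_A Λ_A V_A^{−1} and B = V_B Λ_B V_B^{−1} and disjoint spectra, and let X be the unique solution of AX − XB = F. Let (α_1, β_1), …, (α_k, β_k) ∈ ℂ² be such that no β_j is an eigenvalue of A and no α_j is an eigenvalue of B, let X^{(k)} be the k-th ADI iterate starting from X^{(0)} = 0, and set r_k(z) = Π_{j=1}^{k} (z − α_j)/(z − β_j). Then ‖X − X^{(k)}‖₂ ≤ κ₂(V_A) κ₂(V_B) · ( sup_{z ∈ λ(A)} |r_k(z)| ) · ( sup_{w ∈ λ(B)} 1/|r_k(w)| ) · ‖X‖₂, where κ₂(M) = ‖M‖₂ ‖M^{−1}‖₂.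 -/
open Matrix

theorem Set.Finite.le_ciSup₂_of_mem {α β : Type*} [ConditionallyCompleteLattice α] {S : Set β}
    (hS : S.Finite) (f : β → α) {z : β} (hz : z ∈ S) : f z ≤ ⨆ w ∈ S, f w :=
  le_ciSup₂ (f := fun w _ => f w) ((hS.image f).bddAbove.mono
    (Set.iUnion_subset fun _ => Set.range_subset_iff.2 fun hw => Set.mem_image_of_mem f hw)) z hz

def adiRational {K : Type*} [Field K] (α β : ℕ → K) (k : ℕ) (z : K) : K :=
  ∏ j ∈ Finset.range k, (z - α j) / (z - β j)

section Scalar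

variable {K : Type*} [Field K]

theorem adi_scalar_error_step {a b α β x f u h v : K} (hβ : a - β ≠ 0) (hα : b - α ≠ 0)
    (hx : a * x - x * b = f) (h1 : (a - β) * h = u * (b - β) + f)
    (h2 : v * (b - α) = (a - α) * h - f) :
    x - v = (a - α) / (a - β) * (x - u) * ((b - α) / (b - β))⁻¹ := by
  have key : (x - v) * (b - α) * (a - β) = (a - α) * (b - β) * (x - u) := by
    linear_combination (β - α) * hx - (a - α) * h1 - (a - β) * h2
  rw [inv_div]
  field_simp
  linear_combination key

theorem adi_scalar_error_eq {a b x f : K} {α β u h : ℕ → K} {k : ℕ}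
    (hβ : ∀ j < k, a - β j ≠ 0) (hα : ∀ j < k, b - α j ≠ 0)
    (hx : a * x - x * b = f) (h0 : u 0 = 0)
    (h1 : ∀ j < k, (a - β j) * h j = u j * (b - β j) + f)
    (h2 : ∀ j < k, u (j + 1) * (b - α j) = (a - α j) * h j - f) :
    x - u k = adiRational α β k a * x * (adiRational α β k b)⁻¹ := by
  induction k with
  | zero => simp [adiRational, h0]
  | succ k ih =>
    have hk := Nat.lt_succ_self k
    rw [adi_scalar_error_step (hβ k hk) (hα k hk) hx (h1 k hk) (h2 k hk),
      ih (fun j hj => hβ j (hj.trans hk)) (fun j hj => hα j (hj.trans hk))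
        (fun j hj => h1 j (hj.trans hk)) (fun j hj => h2 j (hj.trans hk))]
    simp only [adiRational, Finset.prod_range_succ, mul_inv]
    ring

end Scalar

section Eigencoordinates

variable {K : Type*} [Field K] {m n : Type*} [Fintype m] [Fintype n] [DecidableEq m]

theorem spectrum_conj_diagonal {P : Matrix m m K} (hP : IsUnit P.det) (d : m → K) :
    spectrum K (P * diagonal d * P⁻¹) = Set.range d := by
  have hPu : IsUnit P := (isUnit_iff_isUnit_det P).2 hP
  simpa using spectrum.units_conjugate (R := K) (a := diagonal d) (u := hPu.unit)

theorem inv_mul_mul_mul_apply_left_of_eq_conj {P A : Matrix m m K} {d : m → K} (hP : IsUnit P.det)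
    (hA : A = P * diagonal d * P⁻¹) (Y : Matrix m n K) (Q : Matrix n n K) (i : m) (l : n) :
    (P⁻¹ * (A * Y) * Q : Matrix m n K) i l = d i * (P⁻¹ * Y * Q) i l := by
  simp only [hA, ← Matrix.mul_assoc, nonsing_inv_mul _ hP, Matrix.one_mul]
  simp only [Matrix.mul_assoc, diagonal_mul]

theorem inv_mul_mul_mul_apply_right_of_eq_conj [DecidableEq n] {Q B : Matrix n n K} {e : n → K}
    (hQ : IsUnit Q.det) (hB : B = Q * diagonal e * Q⁻¹) (Y : Matrix m n K) (P : Matrix m m K)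
    (i : m) (l : n) :
    (P⁻¹ * (Y * B) * Q : Matrix m n K) i l = (P⁻¹ * Y * Q) i l * e l := by
  simp only [hB, Matrix.mul_assoc, nonsing_inv_mul _ hQ, Matrix.mul_one]
  simp only [← Matrix.mul_assoc, mul_diagonal]

theorem adi_error_eq_conj_diagonal [DecidableEq n] {A P : Matrix m m K} {B Q : Matrix n n K}
    {d : m → K} {e : n → K} (hP : IsUnit P.det) (hQ : IsUnit Q.det)
    (hA : A = P * diagonal d * P⁻¹) (hB : B = Q * diagonal e * Q⁻¹)
    {F X : Matrix m n K} (hX : A * X - X * B = F) {k : ℕ} {α β : ℕ → K}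
    (hβ : ∀ j < k, ∀ i, d i - β j ≠ 0) (hα : ∀ j < k, ∀ l, e l - α j ≠ 0)
    {Xfull Xhalf : ℕ → Matrix m n K} (h0 : Xfull 0 = 0)
    (hstep1 : ∀ j < k, (A - β j • 1) * Xhalf j = Xfull j * (B - β j • 1) + F)
    (hstep2 : ∀ j < k, Xfull (j + 1) * (B - α j • 1) = (A - α j • 1) * Xhalf j - F) :
    X - Xfull k = (P * diagonal (fun i => adiRational α β k (d i)) * P⁻¹) * X *
      (Q * diagonal (fun l => (adiRational α β k (e l))⁻¹) * Q⁻¹) := by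
  have hcoord : P⁻¹ * (X - Xfull k) * Q = diagonal (fun i => adiRational α β k (d i)) *
      (P⁻¹ * X * Q) * diagonal (fun l => (adiRational α β k (e l))⁻¹) := by
    ext i l
    have entry {M N : Matrix m n K} (h : M = N) :
        (P⁻¹ * M * Q : Matrix m n K) i l = (P⁻¹ * N * Q : Matrix m n K) i l := by
      rw [h]
    have hx := entry hX
    have h1 := fun j hj => entry (hstep1 j hj)
    have h2 := fun j hj => entry (hstep2 j hj)
    simp only [Matrix.mul_sub, Matrix.sub_mul, Matrix.mul_add, Matrix.add_mul, Matrix.smul_mul,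
      Matrix.mul_smul, Matrix.one_mul, Matrix.mul_one, Matrix.sub_apply, Matrix.add_apply,
      Matrix.smul_apply, smul_eq_mul, inv_mul_mul_mul_apply_left_of_eq_conj hP hA,
      inv_mul_mul_mul_apply_right_of_eq_conj hQ hB] at hx h1 h2
    have hxk := adi_scalar_error_eq (u := fun j => (P⁻¹ * Xfull j * Q) i l)
      (h := fun j => (P⁻¹ * Xhalf j * Q) i l) (fun j hj => hβ j hj i) (fun j hj => hα j hj l) hx
      (by simp [h0]) (fun j hj => by linear_combination h1 j hj)
      (fun j hj => by linear_combination h2 j hj)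
    rw [mul_diagonal, diagonal_mul, ← hxk, Matrix.mul_sub, Matrix.sub_mul, Matrix.sub_apply]
  calc X - Xfull k = P * (P⁻¹ * (X - Xfull k) * Q) * Q⁻¹ := by
        simp only [← Matrix.mul_assoc, mul_nonsing_inv _ hP, Matrix.one_mul]
        simp only [Matrix.mul_assoc, mul_nonsing_inv _ hQ, Matrix.mul_one]
    _ = _ := by rw [hcoord]; simp only [Matrix.mul_assoc]

end Eigencoordinates

section SpectralNorm

open scoped Matrix.Norms.L2Operator

theorem specNorm_nonneg {m n : ℕ} (M : Matrix (Fin m) (Fin n) ℂ) : 0 ≤ specNorm M :=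
  norm_nonneg _

theorem specNorm_mul_le {m n p : ℕ} (M : Matrix (Fin m) (Fin n) ℂ) (N : Matrix (Fin n) (Fin p) ℂ) :
    specNorm (M * N) ≤ specNorm M * specNorm N :=
  l2_opNorm_mul M N

theorem specNorm_diagonal_le {m : ℕ} {d : Fin m → ℂ} {C : ℝ} (hC : 0 ≤ C)
    (h : ∀ i, ‖d i‖ ≤ C) : specNorm (diagonal d) ≤ C := by
  change ‖(diagonal d : Matrix (Fin m) (Fin m) ℂ)‖ ≤ C
  rw [l2_opNorm_diagonal]
  exact (pi_norm_le_iff_of_nonneg hC).2 h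

theorem specNorm_conj_diagonal_le {m : ℕ} (P : Matrix (Fin m) (Fin m) ℂ) {d : Fin m → ℂ} {C : ℝ}
    (hC : 0 ≤ C) (h : ∀ i, ‖d i‖ ≤ C) :
    specNorm (P * diagonal d * P⁻¹) ≤ specNorm P * specNorm P⁻¹ * C :=
  calc specNorm (P * diagonal d * P⁻¹) ≤ specNorm P * specNorm (diagonal d) * specNorm P⁻¹ :=
        (specNorm_mul_le _ _).trans
          (mul_le_mul_of_nonneg_right (specNorm_mul_le _ _) (specNorm_nonneg _))
    _ ≤ specNorm P * C * specNorm P⁻¹ := by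
        gcongr
        · exact specNorm_nonneg _
        · exact specNorm_nonneg _
        · exact specNorm_diagonal_le hC h
    _ = specNorm P * specNorm P⁻¹ * C := by ring

theorem specNorm_mul_mul_le {m n : ℕ} {L : Matrix (Fin m) (Fin m) ℂ} {R : Matrix (Fin n) (Fin n) ℂ}
    {a b : ℝ} (hL : specNorm L ≤ a) (hR : specNorm R ≤ b) (X : Matrix (Fin m) (Fin n) ℂ) :
    specNorm (L * X * R) ≤ a * specNorm X * b :=
  calc specNorm (L * X * R) ≤ specNorm L * specNorm X * specNorm R :=
        (specNorm_mul_le _ _).trans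
          (mul_le_mul_of_nonneg_right (specNorm_mul_le _ _) (specNorm_nonneg _))
    _ ≤ a * specNorm X * b :=
        mul_le_mul (mul_le_mul_of_nonneg_right hL (specNorm_nonneg _)) hR (specNorm_nonneg _)
          (mul_nonneg ((specNorm_nonneg _).trans hL) (specNorm_nonneg _))

end SpectralNorm

theorem adi_error_bound_diagonalizable_general {m n : ℕ}
    (A : Matrix (Fin m) (Fin m) ℂ) (B : Matrix (Fin n) (Fin n) ℂ)
    (VA : Matrix (Fin m) (Fin m) ℂ) (VB : Matrix (Fin n) (Fin n) ℂ)
    (hVA : IsUnit VA.det) (hVB : IsUnit VB.det)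
    (ΛA : Fin m → ℂ) (ΛB : Fin n → ℂ)
    (hAeig : A = VA * Matrix.diagonal ΛA * VA⁻¹)
    (hBeig : B = VB * Matrix.diagonal ΛB * VB⁻¹)
    (F X : Matrix (Fin m) (Fin n) ℂ) (hX : A * X - X * B = F)
    (k : ℕ) (α β : ℕ → ℂ)
    (hβ : ∀ j < k, β j ∉ spectrum ℂ A)
    (hα : ∀ j < k, α j ∉ spectrum ℂ B)
    (Xfull Xhalf : ℕ → Matrix (Fin m) (Fin n) ℂ)
    (h0 : Xfull 0 = 0)
    (hstep1 : ∀ j < k, (A - β j • 1) * Xhalf j = Xfull j * (B - β j • 1) + F)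
    (hstep2 : ∀ j < k, Xfull (j + 1) * (B - α j • 1) = (A - α j • 1) * Xhalf j - F) :
    specNorm (X - Xfull k) ≤
      (specNorm VA * specNorm VA⁻¹) * (specNorm VB * specNorm VB⁻¹) *
        (⨆ z ∈ spectrum ℂ A,
          ‖∏ j ∈ Finset.range k, (z - α j) / (z - β j)‖) *
        (⨆ w ∈ spectrum ℂ B,
          (‖∏ j ∈ Finset.range k, (w - α j) / (w - β j)‖)⁻¹) *
        specNorm X := by
  have hspecA : spectrum ℂ A = Set.range ΛA := hAeig ▸ spectrum_conj_diagonal hVA ΛA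
  have hspecB : spectrum ℂ B = Set.range ΛB := hBeig ▸ spectrum_conj_diagonal hVB ΛB
  have hrA (i : Fin m) : ‖adiRational α β k (ΛA i)‖ ≤
      ⨆ z ∈ spectrum ℂ A, ‖∏ j ∈ Finset.range k, (z - α j) / (z - β j)‖ :=
    (hspecA ▸ Set.finite_range ΛA).le_ciSup₂_of_mem (fun z => ‖adiRational α β k z‖)
      (hspecA ▸ Set.mem_range_self i)
  have hrB (l : Fin n) : ‖(adiRational α β k (ΛB l))⁻¹‖ ≤
      ⨆ w ∈ spectrum ℂ B, (‖∏ j ∈ Finset.range k, (w - α j) / (w - β j)‖)⁻¹ := by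
    rw [norm_inv]
    exact (hspecB ▸ Set.finite_range ΛB).le_ciSup₂_of_mem (fun w => ‖adiRational α β k w‖⁻¹)
      (hspecB ▸ Set.mem_range_self l)
  rw [adi_error_eq_conj_diagonal hVA hVB hAeig hBeig hX
    (fun j hj i h => hβ j hj (hspecA ▸ ⟨i, sub_eq_zero.1 h⟩))
    (fun j hj l h => hα j hj (hspecB ▸ ⟨l, sub_eq_zero.1 h⟩)) h0 hstep1 hstep2]
  refine (specNorm_mul_mul_le
    (specNorm_conj_diagonal_le VA (Real.iSup_nonneg fun _ => Real.iSup_nonneg fun _ =>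
      norm_nonneg _) hrA)
    (specNorm_conj_diagonal_le VB (Real.iSup_nonneg fun _ => Real.iSup_nonneg fun _ =>
      inv_nonneg.2 (norm_nonneg _)) hrB) X).trans_eq ?_
  ring

/-- **ADI error bound for diagonalizable (possibly nonnormal) coefficient matrices.**
If `A = V_A Λ_A V_A⁻¹`, `B = V_B Λ_B V_B⁻¹` are diagonalizable with disjoint spectra,
`X` is the solution of `AX - XB = F`, and `X⁽ᵏ⁾` is the `k`-th ADI iterate (from
`X⁽⁰⁾ = 0`, with shifts avoiding the spectra), then
`‖X - X⁽ᵏ⁾‖₂ ≤ κ₂(V_A) κ₂(V_B) (sup_{z ∈ λ(A)} |r_k(z)|) (sup_{w ∈ λ(B)} 1/|r_k(w)|) ‖X‖₂`,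
where `r_k(z) = ∏ⱼ (z - αⱼ)/(z - βⱼ)` and `κ₂(M) = ‖M‖₂‖M⁻¹‖₂`. -/
theorem adi_error_bound_diagonalizable {m n : ℕ}
    (A : Matrix (Fin m) (Fin m) ℂ) (B : Matrix (Fin n) (Fin n) ℂ)
    (VA : Matrix (Fin m) (Fin m) ℂ) (VB : Matrix (Fin n) (Fin n) ℂ)
    (hVA : IsUnit VA.det) (hVB : IsUnit VB.det)
    (ΛA : Fin m → ℂ) (ΛB : Fin n → ℂ)
    (hAeig : A = VA * Matrix.diagonal ΛA * VA⁻¹)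
    (hBeig : B = VB * Matrix.diagonal ΛB * VB⁻¹)
    (hdisj : spectrum ℂ A ∩ spectrum ℂ B = ∅)
    (F X : Matrix (Fin m) (Fin n) ℂ) (hX : A * X - X * B = F)
    (k : ℕ) (α β : ℕ → ℂ)
    (hβ : ∀ j < k, β j ∉ spectrum ℂ A)
    (hα : ∀ j < k, α j ∉ spectrum ℂ B)
    (Xfull Xhalf : ℕ → Matrix (Fin m) (Fin n) ℂ)
    (h0 : Xfull 0 = 0)
    (hstep1 : ∀ j < k, (A - β j • 1) * Xhalf j = Xfull j * (B - β j • 1) + F)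
    (hstep2 : ∀ j < k, Xfull (j + 1) * (B - α j • 1) = (A - α j • 1) * Xhalf j - F) :
    specNorm (X - Xfull k) ≤
      (specNorm VA * specNorm VA⁻¹) * (specNorm VB * specNorm VB⁻¹) *
        (⨆ z ∈ spectrum ℂ A,
          ‖∏ j ∈ Finset.range k, (z - α j) / (z - β j)‖) *
        (⨆ w ∈ spectrum ℂ B,
          (‖∏ j ∈ Finset.range k, (w - α j) / (w - β j)‖)⁻¹) *
        specNorm X :=
  adi_error_bound_diagonalizable_general A B VA VB hVA hVB ΛA ΛB hAeig hBeig F X hX k α β hβ hα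
    Xfull Xhalf h0 hstep1 hstep2
end
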